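/- arXiv:1307.8307 — 9 statements merged into one kernel-verified Lean document; each statement's English description precedes it below -/
import Mathlib

section
/- If a fibrous preorder (R, A, B, p, ∂) admits a map u : B → A with p ∘ u = id_B and such that u(p(a)) R y implies a R y for all a ∈ A, y ∈ B, then the relation R° on B defined by x R° y ↔ u(x) R y is transitive. -/
theorem fibrous_u_transitive_general {A B : Type*}
    (p : A → B) (R : A → B → Prop) (bd : A → B → A)
    (F1 : ∀ a b, R a b → p (bd a b) = b)
    (F3 : ∀ a b y, R a b → R (bd a b) y → R a y)
    (u : B → A)
    (hu2 : ∀ a y, R (u (p a)) y → R a y) :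
    ∀ x y z : B, R (u x) y → R (u y) z → R (u x) z := by
  intro x y z hxy hyz
  have hbd : R (bd (u x) y) z := hu2 _ _ (by rwa [F1 _ _ hxy])
  exact F3 _ _ _ hxy hbd

/-- If a fibrous preorder admits `u : B → A` with `p ∘ u = id` and
`u(p(a)) R y → a R y`, then `x R° y ↔ u(x) R y` is transitive. -/
theorem fibrous_u_transitive {A B : Type*}
    (p : A → B) (R : A → B → Prop) (bd : A → B → A)
    (F1 : ∀ a b, R a b → p (bd a b) = b)
    (F2 : ∀ a, R a (p a))
    (F3 : ∀ a b y, R a b → R (bd a b) y → R a y)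
    (u : B → A) (hu1 : ∀ x, p (u x) = x)
    (hu2 : ∀ a y, R (u (p a)) y → R a y) :
    ∀ x y z : B, R (u x) y → R (u y) z → R (u x) z :=
  fibrous_u_transitive_general p R bd F1 F3 u hu2
end

section
/- For a topological space (B, τ), the structure with A = {(U, x) | x ∈ U ∈ τ}, p(U, x) = x, (U, x) R y ↔ y ∈ U, and ∂((U, x), y) = (U, y) is a fibrous preorder, i.e., it satisfies axioms (F1), (F2), (F3). -/
/-- The set `A = {(U, x) | x ∈ U ∈ τ}` associated to a topological space. -/
def OpenPt (B : Type*) [TopologicalSpace B] : Type _ :=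
  {ux : Set B × B // IsOpen ux.1 ∧ ux.2 ∈ ux.1}

/-- For a topological space `(B, τ)`, the structure with
`A = {(U,x) | x ∈ U ∈ τ}`, `p(U,x) = x`, `(U,x) R y ↔ y ∈ U`,
`∂((U,x), y) = (U, y)` satisfies (F1), (F2), (F3). -/
theorem topspace_gives_fibrous_preorder (B : Type*) [TopologicalSpace B]
    (p : OpenPt B → B) (hp : ∀ a, p a = a.1.2)
    (R : OpenPt B → B → Prop) (hR : ∀ a y, R a y ↔ y ∈ a.1.1)
    (bd : ∀ (a : OpenPt B) (y : B), R a y → OpenPt B)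
    (hbd : ∀ a y h, (bd a y h).1 = (a.1.1, y)) :
    (∀ a b (h : R a b), p (bd a b h) = b) ∧
    (∀ a : OpenPt B, R a (p a)) ∧
    (∀ a b y (h : R a b), R (bd a b h) y → R a y) := by
  refine ⟨fun a b h => ?_, fun a => ?_, fun a b y h hy => ?_⟩
  · rw [hp, hbd]
  · rw [hR, hp]
    exact a.2.2
  · rw [hR, hbd] at hy
    exact (hR a y).2 hy
end

section
/- If f : (B, τ) → (B', τ') is a continuous map of topological spaces, then (f, f*) with f*((U', x'), y) = (f⁻¹(U'), y) for x' = f(y) is a fibrous morphism between the associated fibrous preorders; that is, p(f*((U', x'), y)) = y and f*((U', x'), y) R z implies (U', x') R' f(z). -/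
/-- A continuous map `f : B → B'` together with
`f*((U', x'), y) = (f⁻¹(U'), y)` is a fibrous morphism between the associated
fibrous preorders: `f⁻¹(U')` is open and contains `y`, `p(f*((U',x'),y)) = y`,
and `f*((U',x'),y) R z → (U',x') R' f(z)`. -/
theorem continuous_gives_fibrous_morphism
    {B B' : Type*} [TopologicalSpace B] [TopologicalSpace B']
    (f : B → B') (hf : Continuous f)
    (p : OpenPt B → B) (hp : ∀ a, p a = a.1.2)
    (R : OpenPt B → B → Prop) (hR : ∀ a y, R a y ↔ y ∈ a.1.1)
    (p' : OpenPt B' → B') (hp' : ∀ a', p' a' = a'.1.2)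
    (R' : OpenPt B' → B' → Prop) (hR' : ∀ a' y', R' a' y' ↔ y' ∈ a'.1.1)
    (fstar : ∀ (a' : OpenPt B') (y : B), p' a' = f y → OpenPt B)
    (hfstar : ∀ a' y h, (fstar a' y h).1 = (f ⁻¹' a'.1.1, y)) :
    (∀ a' y (h : p' a' = f y), IsOpen (f ⁻¹' a'.1.1) ∧ y ∈ f ⁻¹' a'.1.1) ∧
    (∀ a' y (h : p' a' = f y), p (fstar a' y h) = y) ∧
    (∀ a' y (h : p' a' = f y) z, R (fstar a' y h) z → R' a' (f z)) := by
  refine ⟨fun a' y h => ⟨hf.isOpen_preimage _ a'.2.1, ?_⟩, fun a' y h => ?_,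
    fun a' y h z hz => ?_⟩
  · rw [Set.mem_preimage, ← h, hp']
    exact a'.2.2
  · rw [hp, hfstar]
  · rw [hR']
    simpa only [hR, hfstar, Set.mem_preimage] using hz
end

section
/- Given a spatial fibrous preorder (R, A, B, p, ∂, s, m), the collection τ of subsets O ⊆ B such that for every y ∈ O there exists a ∈ A with p(a) = y and N(a) ⊆ O (where N(a) = {y | a R y}) is a topology on B. -/
/-!
Think of `N a = {z | a R z}` as a basic neighbourhood of `p a`. Unions of such open sets are
open for free; the section `s` makes every point covered, so `B` is open, and `m` refines two
neighbourhoods over the same point into one inside both, so binary intersections are open.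
-/

open Set

namespace FibredNeighbourhoods

variable {A B : Type*} (p : A → B) (N : A → Set B)

def IsOpen (O : Set B) : Prop := ∀ y ∈ O, ∃ a, p a = y ∧ N a ⊆ O

variable {p N}

theorem isOpen_univ (hp : Function.Surjective p) : IsOpen p N univ := fun y _ =>
  let ⟨a, ha⟩ := hp y
  ⟨a, ha, subset_univ _⟩

theorem isOpen_inter
    (hmeet : ∀ a a', p a = p a' → ∃ a'', p a'' = p a ∧ N a'' ⊆ N a ∩ N a')
    {O O' : Set B} (hO : IsOpen p N O) (hO' : IsOpen p N O') : IsOpen p N (O ∩ O') := by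
  rintro y ⟨hyO, hyO'⟩
  obtain ⟨a, rfl, haO⟩ := hO y hyO
  obtain ⟨a', ha', ha'O'⟩ := hO' (p a) hyO'
  obtain ⟨a'', ha'', hN⟩ := hmeet a a' ha'.symm
  exact ⟨a'', ha'', hN.trans (inter_subset_inter haO ha'O')⟩

theorem isOpen_sUnion {S : Set (Set B)} (hS : ∀ O ∈ S, IsOpen p N O) :
    IsOpen p N (⋃₀ S) := by
  rintro y ⟨O, hOS, hyO⟩
  obtain ⟨a, ha, haO⟩ := hS O hOS y hyO
  exact ⟨a, ha, haO.trans (subset_sUnion_of_mem hOS)⟩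

abbrev topology (hp : Function.Surjective p)
    (hmeet : ∀ a a', p a = p a' → ∃ a'', p a'' = p a ∧ N a'' ⊆ N a ∩ N a') :
    TopologicalSpace B where
  IsOpen := IsOpen p N
  isOpen_univ := isOpen_univ hp
  isOpen_inter _ _ := isOpen_inter hmeet
  isOpen_sUnion _ := isOpen_sUnion

end FibredNeighbourhoods

theorem spatial_fibrous_preorder_topology_general {A B : Type*}
    (p : A → B) (R : A → B → Prop)
    (s : B → A) (F4 : ∀ y, p (s y) = y)
    (m : A → A → A)
    (F5 : ∀ a a', p a = p a' → p (m a a') = p a ∧ p (m a a') = p a')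
    (F6 : ∀ a a' y, p a = p a' → R (m a a') y → R a y ∧ R a' y) :
    ∃ t : TopologicalSpace B,
      ∀ O : Set B, t.IsOpen O ↔ ∀ y ∈ O, ∃ a : A, p a = y ∧ {z | R a z} ⊆ O := by
  have hp : Function.Surjective p := Function.LeftInverse.surjective F4
  have hmeet : ∀ a a', p a = p a' →
      ∃ a'', p a'' = p a ∧ {z | R a'' z} ⊆ {z | R a z} ∩ {z | R a' z} :=
    fun a a' h => ⟨m a a', (F5 a a' h).1, fun z hz => F6 a a' z h hz⟩
  exact ⟨FibredNeighbourhoods.topology hp hmeet, fun _ => Iff.rfl⟩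

/-- Given a spatial fibrous preorder `(R, A, B, p, ∂, s, m)`, the
collection of sets `O ⊆ B` such that every `y ∈ O` admits `a ∈ A` with
`p a = y` and `N(a) = {z | a R z} ⊆ O` is a topology on `B`. -/
theorem spatial_fibrous_preorder_topology {A B : Type*}
    (p : A → B) (R : A → B → Prop) (bd : A → B → A)
    (F1 : ∀ a b, R a b → p (bd a b) = b)
    (F2 : ∀ a, R a (p a))
    (F3 : ∀ a b y, R a b → R (bd a b) y → R a y)
    (s : B → A) (F4 : ∀ y, p (s y) = y)
    (m : A → A → A)
    (F5 : ∀ a a', p a = p a' → p (m a a') = p a ∧ p (m a a') = p a')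
    (F6 : ∀ a a' y, p a = p a' → R (m a a') y → R a y ∧ R a' y) :
    ∃ t : TopologicalSpace B,
      ∀ O : Set B, t.IsOpen O ↔ ∀ y ∈ O, ∃ a : A, p a = y ∧ {z | R a z} ⊆ O :=
  spatial_fibrous_preorder_topology_general p R s F4 m F5 F6
end

section
/- In a spatial fibrous preorder, for every a ∈ A the set N(a) = {y ∈ B | a R y} is open in the induced topology; more precisely, for each y ∈ N(a), the element a' = ∂(a, y) satisfies p(a') = y and N(a') ⊆ N(a). -/
theorem spatial_fibrous_preorder_N_open_general {A B : Type*}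
    (p : A → B) (R : A → B → Prop) (bd : A → B → A)
    (F1 : ∀ a b, R a b → p (bd a b) = b)
    (F3 : ∀ a b y, R a b → R (bd a b) y → R a y)
    (a : A) :
    (∀ y ∈ {y | R a y}, ∃ a' : A, p a' = y ∧ {z | R a' z} ⊆ {y | R a y}) ∧
    (∀ y, R a y → p (bd a y) = y ∧ {z | R (bd a y) z} ⊆ {y | R a y}) := by
  have bd_spec : ∀ y, R a y → p (bd a y) = y ∧ {z | R (bd a y) z} ⊆ {y | R a y} :=
    fun y hy => ⟨F1 a y hy, fun z => F3 a y z hy⟩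
  exact ⟨fun y hy => ⟨bd a y, bd_spec y hy⟩, bd_spec⟩

/-- In a spatial fibrous preorder, every `N(a) = {y | a R y}` is
open in the induced topology; more precisely, for `y ∈ N(a)` the element
`a' = ∂(a, y)` satisfies `p a' = y` and `N(a') ⊆ N(a)`. -/
theorem spatial_fibrous_preorder_N_open {A B : Type*}
    (p : A → B) (R : A → B → Prop) (bd : A → B → A)
    (F1 : ∀ a b, R a b → p (bd a b) = b)
    (F2 : ∀ a, R a (p a))
    (F3 : ∀ a b y, R a b → R (bd a b) y → R a y)
    (s : B → A) (F4 : ∀ y, p (s y) = y)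
    (m : A → A → A)
    (F5 : ∀ a a', p a = p a' → p (m a a') = p a ∧ p (m a a') = p a')
    (F6 : ∀ a a' y, p a = p a' → R (m a a') y → R a y ∧ R a' y)
    (a : A) :
    (∀ y ∈ {y | R a y}, ∃ a' : A, p a' = y ∧ {z | R a' z} ⊆ {y | R a y}) ∧
    (∀ y, R a y → p (bd a y) = y ∧ {z | R (bd a y) z} ⊆ {y | R a y}) :=
  spatial_fibrous_preorder_N_open_general p R bd F1 F3 a
end

section
/- If (f, f*) is a fibrous morphism between spatial fibrous preorders, then f : B → B' is continuous with respect to the induced topologies: for every open O' in B' (i.e., every y' ∈ O' admits a' with p'(a') = y' and N'(a') ⊆ O'), the preimage f⁻¹(O') is open in B. -/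
theorem fibrous_morphism_continuous_general {A B A' B' : Type*}
    (p : A → B) (R : A → B → Prop)
    (p' : A' → B') (R' : A' → B' → Prop)
    (f : B → B') (fstar : A' → B → A)
    (hf1 : ∀ a' b, p' a' = f b → p (fstar a' b) = b)
    (hf2 : ∀ a' b y, p' a' = f b → R (fstar a' b) y → R' a' (f y)) :
    ∀ O' : Set B',
      (∀ y' ∈ O', ∃ a' : A', p' a' = y' ∧ {z | R' a' z} ⊆ O') →
      (∀ y ∈ f ⁻¹' O', ∃ a : A, p a = y ∧ {z | R a z} ⊆ f ⁻¹' O') := by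
  intro O' hO' y hy
  obtain ⟨a', ha'y, hNa'⟩ := hO' (f y) hy
  exact ⟨fstar a' y, hf1 a' y ha'y, fun z hz => hNa' (hf2 a' y z ha'y hz)⟩

/-- If `(f, f*)` is a fibrous morphism between spatial fibrous
preorders then `f` is continuous for the induced topologies: the preimage of
any induced-open set of `B'` is induced-open in `B`. -/
theorem fibrous_morphism_continuous {A B A' B' : Type*}
    (p : A → B) (R : A → B → Prop) (bd : A → B → A)
    (F1 : ∀ a b, R a b → p (bd a b) = b)
    (F2 : ∀ a, R a (p a))
    (F3 : ∀ a b y, R a b → R (bd a b) y → R a y)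
    (s : B → A) (F4 : ∀ y, p (s y) = y)
    (m : A → A → A)
    (F5 : ∀ a a', p a = p a' → p (m a a') = p a ∧ p (m a a') = p a')
    (F6 : ∀ a a' y, p a = p a' → R (m a a') y → R a y ∧ R a' y)
    (p' : A' → B') (R' : A' → B' → Prop) (bd' : A' → B' → A')
    (F1' : ∀ a b, R' a b → p' (bd' a b) = b)
    (F2' : ∀ a, R' a (p' a))
    (F3' : ∀ a b y, R' a b → R' (bd' a b) y → R' a y)
    (s' : B' → A') (F4' : ∀ y, p' (s' y) = y)
    (m' : A' → A' → A')
    (F5' : ∀ a a', p' a = p' a' → p' (m' a a') = p' a ∧ p' (m' a a') = p' a')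
    (F6' : ∀ a a' y, p' a = p' a' → R' (m' a a') y → R' a y ∧ R' a' y)
    (f : B → B') (fstar : A' → B → A)
    (hf1 : ∀ a' b, p' a' = f b → p (fstar a' b) = b)
    (hf2 : ∀ a' b y, p' a' = f b → R (fstar a' b) y → R' a' (f y)) :
    ∀ O' : Set B',
      (∀ y' ∈ O', ∃ a' : A', p' a' = y' ∧ {z | R' a' z} ⊆ O') →
      (∀ y ∈ f ⁻¹' O', ∃ a : A, p a = y ∧ {z | R a z} ⊆ f ⁻¹' O') :=
  fibrous_morphism_continuous_general p R p' R' f fstar hf1 hf2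
end

section
/- A topological space (B, τ) is an Alexandrov space if and only if its associated fibrous preorder admits a map u : B → A with p ∘ u = id_B and u(p(a)) R y → a R y for all a ∈ A, y ∈ B. -/
open Set

theorem alexandrovDiscrete_iff_isOpen_nhdsKer_singleton {X : Type*} [TopologicalSpace X] :
    AlexandrovDiscrete X ↔ ∀ x : X, IsOpen (nhdsKer {x}) := by
  refine ⟨fun _ _ ↦ isOpen_nhdsKer, fun h ↦ ⟨fun S hS ↦ ?_⟩⟩
  refine isOpen_iff_forall_mem_open.2 fun x hx ↦ ⟨nhdsKer {x}, ?_, h x, subset_nhdsKer rfl⟩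
  exact subset_sInter fun U hU ↦ nhdsKer_minimal (singleton_subset_iff.2 (hx U hU)) (hS U hU)

/-- The section is necessarily `x ↦ (nhdsKer {x}, x)`, the smallest open neighbourhood of `x`. -/
theorem exists_least_section_openPt_iff {B : Type*} [TopologicalSpace B] :
    (∃ u : B → OpenPt B, (∀ x, (u x).1.2 = x) ∧ ∀ a : OpenPt B, (u a.1.2).1.1 ⊆ a.1.1) ↔
      ∀ x : B, IsOpen (nhdsKer {x}) := by
  constructor
  · rintro ⟨u, hu, hleast⟩ x
    have hx : x ∈ (u x).1.1 := by simpa only [hu x] using (u x).2.2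
    have hker : nhdsKer {x} = (u x).1.1 :=
      Subset.antisymm (nhdsKer_minimal (singleton_subset_iff.2 hx) (u x).2.1)
        (subset_nhdsKer_iff.2 fun V hV hxV ↦ hleast ⟨(V, x), hV, singleton_subset_iff.1 hxV⟩)
    exact hker ▸ (u x).2.1
  · intro h
    exact ⟨fun x ↦ ⟨(nhdsKer {x}, x), h x, subset_nhdsKer rfl⟩, fun _ ↦ rfl,
      fun a ↦ nhdsKer_minimal (singleton_subset_iff.2 a.2.2) a.2.1⟩

/-- `(B, τ)` is Alexandrov iff its associated fibrous preorder
admits `u : B → A` with `p ∘ u = id` and `u(p(a)) R y → a R y`. -/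
theorem alexandrov_iff_u_map (B : Type*) [TopologicalSpace B]
    (p : OpenPt B → B) (hp : ∀ a, p a = a.1.2)
    (R : OpenPt B → B → Prop) (hR : ∀ a y, R a y ↔ y ∈ a.1.1) :
    (∀ S : Set (Set B), (∀ U ∈ S, IsOpen U) → IsOpen (⋂₀ S)) ↔
    ∃ u : B → OpenPt B, (∀ x, p (u x) = x) ∧
      ∀ (a : OpenPt B) (y : B), R (u (p a)) y → R a y := by
  obtain rfl : p = fun a ↦ a.1.2 := funext hp
  obtain rfl : R = fun a y ↦ y ∈ a.1.1 := funext₂ fun a y ↦ propext (hR a y)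
  calc (∀ S : Set (Set B), (∀ U ∈ S, IsOpen U) → IsOpen (⋂₀ S))
      ↔ AlexandrovDiscrete B := ⟨fun h ↦ ⟨h⟩, fun h ↦ h.isOpen_sInter⟩
    _ ↔ ∀ x : B, IsOpen (nhdsKer {x}) := alexandrovDiscrete_iff_isOpen_nhdsKer_singleton
    _ ↔ _ := exists_least_section_openPt_iff.symm
end

section
/- Let I be a monoid, B a set, (R_i)_{i∈I} a family of binary relations on B and ∂_i : R_i → I maps such that (1) x R_i x; (2) x R_{ij} y → x R_i y ∧ x R_j y; (3) x R_i b ∧ b R_{∂_i(x,b)} y → x R_i y. Then A = I × B with p(i, x) = x, s(x) = (1, x), m((i,x),(j,x)) = (ij, x), (i, x) R y ↔ x R_i y, and ∂((i,x), y) = (∂_i(x,y), y) is a spatial fibrous preorder. -/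
/-- For a monoid `I`, a set `B`, relations `R_i ⊆ B × B` and maps
`∂_i : R_i → I` with (1) `x R_i x`, (2) `x R_{ij} y → x R_i y ∧ x R_j y`,
(3) `x R_i b ∧ b R_{∂_i(x,b)} y → x R_i y`, the structure `A = I × B`,
`p(i,x) = x`, `s(x) = (1,x)`, `m((i,x),(j,x)) = (ij,x)`,
`(i,x) R y ↔ x R_i y`, `∂((i,x),y) = (∂_i(x,y), y)` is a spatial fibrous
preorder. -/
theorem indexed_preorders_spatial_fibrous_preorder
    (I : Type*) [Monoid I] (B : Type*)
    (Ri : I → B → B → Prop) (di : I → B → B → I)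
    (h1 : ∀ (i : I) (x : B), Ri i x x)
    (h2 : ∀ (i j : I) (x y : B), Ri (i * j) x y → Ri i x y ∧ Ri j x y)
    (h3 : ∀ (i : I) (x b y : B), Ri i x b → Ri (di i x b) b y → Ri i x y)
    (p : I × B → B) (hp : ∀ a, p a = a.2)
    (R : I × B → B → Prop) (hR : ∀ a y, R a y ↔ Ri a.1 a.2 y)
    (s : B → I × B) (hs : ∀ x, s x = (1, x))
    (m : I × B → I × B → I × B)
    (hm : ∀ a a', a.2 = a'.2 → m a a' = (a.1 * a'.1, a.2))
    (bd : I × B → B → I × B)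
    (hbd : ∀ a y, R a y → bd a y = (di a.1 a.2 y, y)) :
    (∀ a b, R a b → p (bd a b) = b) ∧
    (∀ a, R a (p a)) ∧
    (∀ a b y, R a b → R (bd a b) y → R a y) ∧
    (∀ y, p (s y) = y) ∧
    (∀ a a', p a = p a' → p (m a a') = p a ∧ p (m a a') = p a') ∧
    (∀ a a' y, p a = p a' → R (m a a') y → R a y ∧ R a' y) := by
  obtain rfl : p = Prod.snd := funext hp
  obtain rfl : s = fun x => (1, x) := funext hs
  obtain rfl : R = fun a y => Ri a.1 a.2 y := funext₂ fun a y => propext (hR a y)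
  refine ⟨fun a b hab => by rw [hbd a b hab], fun a => h1 a.1 a.2, ?_, fun _ => rfl, ?_, ?_⟩
  · intro a b y hab hby
    rw [hbd a b hab] at hby
    exact h3 a.1 a.2 b y hab hby
  · intro a a' h
    rw [hm a a' h]
    exact ⟨rfl, h⟩
  · intro a a' y h hmy
    rw [hm a a' h] at hmy
    obtain ⟨hay, ha'y⟩ := h2 a.1 a'.1 a.2 y hmy
    exact ⟨hay, show Ri a'.1 a'.2 y from h ▸ ha'y⟩
end

section
/- Let f : (B, d) → (B', d') be a continuous map of metric spaces. For every n ∈ ℕ⁺ and y ∈ B there exists k ∈ ℕ⁺ such that for all z ∈ B, d(z, y) < 1/k implies d'(f(z), f(y)) < 1/n; consequently, setting f*((n, f(y)), y) = (k, y) defines a fibrous morphism between the spatial fibrous preorders associated to (B, d) and (B', d'), i.e., p(f*((n, f(y)), y)) = y and f*((n, f(y)), y) R z → (n, f(y)) R' f(z). -/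
theorem ContinuousAt.exists_pnat_forall_dist_lt {X Y : Type*} [PseudoMetricSpace X]
    [PseudoMetricSpace Y] {f : X → Y} {y : X} (hf : ContinuousAt f y) {ε : ℝ} (hε : 0 < ε) :
    ∃ k : ℕ+, ∀ z : X, dist z y < 1 / (k : ℝ) → dist (f z) (f y) < ε := by
  obtain ⟨δ, hδ, hball⟩ := Metric.continuousAt_iff.mp hf ε hε
  obtain ⟨k, hk⟩ := exists_nat_one_div_lt hδ
  refine ⟨k.succPNat, fun z hz => hball (hz.trans ?_)⟩
  simpa using hk

/-- For a continuous map `f : (B,d) → (B',d')` of metric spaces,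
every `n ∈ ℕ⁺` and `y ∈ B` admit `k ∈ ℕ⁺` with
`d(z,y) < 1/k → d'(f z, f y) < 1/n`; consequently `f*((n, f y), y) = (k, y)`
satisfies the fibrous-morphism conditions `p(f*((n, f y), y)) = y` and
`f*((n, f y), y) R z → (n, f y) R' f z`. -/
theorem metric_continuous_fibrous_morphism
    {B B' : Type*} [MetricSpace B] [MetricSpace B']
    (f : B → B') (hf : Continuous f) :
    ∀ (n : ℕ+) (y : B), ∃ k : ℕ+,
      (∀ z : B, dist z y < 1 / (k : ℝ) → dist (f z) (f y) < 1 / (n : ℝ)) ∧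
      ((k, y) : ℕ+ × B).2 = y ∧
      (∀ z : B, dist y z < 1 / (k : ℝ) → dist (f y) (f z) < 1 / (n : ℝ)) := by
  intro n y
  obtain ⟨k, hk⟩ := hf.continuousAt.exists_pnat_forall_dist_lt (ε := 1 / (n : ℝ)) (by positivity)
  refine ⟨k, hk, rfl, fun z hz => ?_⟩
  rw [dist_comm] at hz ⊢
  exact hk z hz
end
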